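/- Let q be an odd positive integer written as q = uv with gcd(u,v) = 1, and let m, n be integers. Choose ū with u·ū ≡ 1 (mod v) and v̄ with v·v̄ ≡ 1 (mod u). Then the Salié sum satisfies the twisted multiplicativity S(m, n; q) = S(m·ū, n·ū; v) · S(m·v̄, n·v̄; u). -/

import Mathlib

/-!
Write `e_c(y) = exp(2πi y / c)` for `y ∈ ZMod c`. By the Chinese remainder theorem a unit `x`
mod `uv` is the same as a pair of units `(x mod u, x mod v)`, and the Jacobi symbol is
multiplicative in its modulus, so `(x / uv) = (x / u) (x / v)`. For the exponential, the
hypotheses on `ū, v̄` give `u ū + v v̄ ≡ 1 (mod uv)`, hence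
`e_{uv}(y) = e_{uv}(u ū y) e_{uv}(v v̄ y) = e_v(ū y) e_u(v̄ y)`.
Applied to `y = m x + n x̄`, each term of `S(m, n; uv)` factors as a term of `S(mū, nū; v)`
times a term of `S(mv̄, nv̄; u)`.
-/

open Complex Finset

/-- The Salié sum `S(m, n; c) = Σ*_{x mod c} (x/c) e((m x + n x̄)/c)`,
where `(x/c)` is the Jacobi symbol and `x̄` the inverse of `x` mod `c`. -/
noncomputable def salie (m n : ℤ) (c : ℕ) : ℂ :=
  ∑ x ∈ Finset.range c,
    if Nat.Coprime x c then
      (jacobiSym (x : ℤ) c : ℂ) *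
        Complex.exp (2 * Real.pi * Complex.I *
          (((m * x + n * (((x : ZMod c)⁻¹).val : ℤ) : ℤ)) : ℂ) / (c : ℂ))
    else 0

namespace ZMod

lemma stdAddChar_natCast_mul {c d k : ℕ} [NeZero c] [NeZero d] (h : c = k * d) (w : ZMod c) :
    stdAddChar ((k : ZMod c) * w) = stdAddChar (cast w : ZMod d) := by
  subst h
  have hk : (k : ℂ) ≠ 0 := Nat.cast_ne_zero.mpr (left_ne_zero_of_mul (NeZero.ne (k * d)))
  rw [← intCast_zmod_cast w, cast_intCast (dvd_mul_left d k), ← Int.cast_natCast k,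
    ← Int.cast_mul, stdAddChar_coe, stdAddChar_coe]
  congr 1
  push_cast
  field_simp

variable {u v : ℕ}

lemma natCast_mul_add_natCast_mul_eq_one (hcop : u.Coprime v) {ubar vbar : ℤ}
    (hubar : (u : ℤ) * ubar ≡ 1 [ZMOD v]) (hvbar : (v : ℤ) * vbar ≡ 1 [ZMOD u]) :
    ((u * ubar + v * vbar : ℤ) : ZMod (u * v)) = 1 := by
  rw [← Int.cast_one, intCast_eq_intCast_iff, Nat.cast_mul,
    ← Int.modEq_and_modEq_iff_modEq_mul (by simpa using hcop)]
  constructor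
  · simpa using (Int.modEq_zero_iff_dvd.mpr (dvd_mul_right (u : ℤ) ubar)).add hvbar
  · simpa using hubar.add (Int.modEq_zero_iff_dvd.mpr (dvd_mul_right (v : ℤ) vbar))

lemma stdAddChar_eq_mul_of_add_eq_one [NeZero u] [NeZero v] {ubar vbar : ZMod (u * v)}
    (h : u * ubar + v * vbar = 1) (y : ZMod (u * v)) :
    stdAddChar y = stdAddChar (castHom (dvd_mul_left v u) (ZMod v) (ubar * y)) *
      stdAddChar (castHom (dvd_mul_right u v) (ZMod u) (vbar * y)) := by
  conv_lhs => rw [← one_mul y, ← h, add_mul, mul_assoc, mul_assoc]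
  rw [AddChar.map_add_eq_mul, stdAddChar_natCast_mul rfl,
    stdAddChar_natCast_mul (mul_comm u v), castHom_apply, castHom_apply]

lemma jacobiSym_val_mul_right [NeZero u] [NeZero v] (x : ZMod (u * v)) :
    jacobiSym x.val (u * v) =
      jacobiSym (cast x : ZMod u).val u * jacobiSym (cast x : ZMod v).val v := by
  have hmod (d : ℕ) [NeZero d] : ((cast x : ZMod d).val : ℤ) ≡ x.val [ZMOD d] := by
    rw [← intCast_eq_intCast_iff]
    push_cast
    rw [natCast_val, natCast_val, cast_id', id]
  rw [jacobiSym.mul_right, jacobiSym.mod_left' (hmod u), jacobiSym.mod_left' (hmod v)]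

def unitsChineseRemainder (hcop : u.Coprime v) : (ZMod (u * v))ˣ ≃* (ZMod u)ˣ × (ZMod v)ˣ :=
  (Units.mapEquiv (chineseRemainder hcop).toMulEquiv).trans .prodUnits

lemma coe_unitsChineseRemainder_fst (hcop : u.Coprime v) (x : (ZMod (u * v))ˣ) :
    ((unitsChineseRemainder hcop x).1 : ZMod u) = cast (x : ZMod (u * v)) :=
  Prod.fst_zmod_cast _

lemma coe_unitsChineseRemainder_snd (hcop : u.Coprime v) (x : (ZMod (u * v))ˣ) :
    ((unitsChineseRemainder hcop x).2 : ZMod v) = cast (x : ZMod (u * v)) :=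
  Prod.snd_zmod_cast _

end ZMod

open ZMod

lemma salie_eq_sum_units (m n : ℤ) (c : ℕ) [NeZero c] :
    salie m n c = ∑ x : (ZMod c)ˣ,
      (jacobiSym (x : ZMod c).val c : ℂ) * stdAddChar (m * x + n * ↑x⁻¹ : ZMod c) := by
  rw [salie, ← Finset.sum_filter]
  symm
  refine Finset.sum_nbij (fun x => (x : ZMod c).val) ?_ ?_ ?_ ?_
  · intro x _
    simpa using ⟨val_lt _, val_coe_unit_coprime x⟩
  · intro x _ y _ h
    exact Units.ext (val_injective c h)
  · intro a ha
    simp only [Finset.coe_filter, Finset.mem_range, Set.mem_ofPred_eq] at ha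
    exact ⟨unitOfCoprime a ha.2, by simp, by simp [val_cast_of_lt ha.1]⟩
  · intro x _
    rw [← stdAddChar_coe]
    push_cast
    rw [natCast_zmod_val, natCast_zmod_val, inv_coe_unit]

theorem stmt_5_general (q u v : ℕ) (hq : 0 < q) (huv : q = u * v)
    (hcop : Nat.Coprime u v) (ubar vbar : ℤ)
    (hubar : (u : ℤ) * ubar ≡ 1 [ZMOD v]) (hvbar : (v : ℤ) * vbar ≡ 1 [ZMOD u])
    (m n : ℤ) :
    salie m n q = salie (m * ubar) (n * ubar) v * salie (m * vbar) (n * vbar) u := by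
  subst huv
  have : NeZero (u * v) := ⟨hq.ne'⟩
  have : NeZero u := ⟨left_ne_zero_of_mul hq.ne'⟩
  have : NeZero v := ⟨right_ne_zero_of_mul hq.ne'⟩
  have hone := natCast_mul_add_natCast_mul_eq_one hcop hubar hvbar
  push_cast at hone
  rw [salie_eq_sum_units, salie_eq_sum_units, salie_eq_sum_units, sum_mul_sum,
    ← Fintype.sum_prod_type_right']
  refine Fintype.sum_equiv (unitsChineseRemainder hcop).toEquiv _ _ fun x => ?_
  simp only [MulEquiv.toEquiv_eq_coe, EquivLike.coe_coe, ← Prod.fst_inv, ← Prod.snd_inv,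
    ← map_inv, coe_unitsChineseRemainder_fst, coe_unitsChineseRemainder_snd]
  rw [stdAddChar_eq_mul_of_add_eq_one hone, jacobiSym_val_mul_right]
  simp only [map_add, map_mul, map_intCast, castHom_apply]
  push_cast
  ring_nf

theorem stmt_5 (q u v : ℕ) (hq : 0 < q) (hqodd : Odd q) (huv : q = u * v)
    (hcop : Nat.Coprime u v) (ubar vbar : ℤ)
    (hubar : (u : ℤ) * ubar ≡ 1 [ZMOD v]) (hvbar : (v : ℤ) * vbar ≡ 1 [ZMOD u])
    (m n : ℤ) :
    salie m n q = salie (m * ubar) (n * ubar) v * salie (m * vbar) (n * vbar) u :=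
  stmt_5_general q u v hq huv hcop ubar vbar hubar hvbar m n
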